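/- arXiv:2003.09265 — 2 statements merged into one kernel-verified Lean document; each statement's English description precedes it below -/
import Mathlib

section
/- Let 𝒜 = {A₁,…,A_m} be an arrangement of finite cameras with distinct centers, and let E⁺⁺ be the union of the sets E_j over those j such that the center c_j has positive depth in every camera A_i with i ≠ j. Then E⁺⁺ is contained in the Euclidean closure of the chiral joint image X_𝒜 in (ℙ²)^m. -/
open Matrix

noncomputable section

/-- Left 3x3 block `G` of a 3x4 camera matrix `A = [G | t]`. -/
def leftBlock (A : Matrix (Fin 3) (Fin 4) ℝ) : Matrix (Fin 3) (Fin 3) ℝ :=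
  Matrix.of fun i j => A i j.castSucc

/-- Last column `t` of a 3x4 camera matrix `A = [G | t]`. -/
def tCol (A : Matrix (Fin 3) (Fin 4) ℝ) : Fin 3 → ℝ := fun i => A i 3

/-- A camera is finite if its left 3x3 block is invertible. -/
def FiniteCam (A : Matrix (Fin 3) (Fin 4) ℝ) : Prop := (leftBlock A).det ≠ 0

/-- The center `(-G⁻¹ t, 1)` of a finite camera. -/
def camCenter (A : Matrix (Fin 3) (Fin 4) ℝ) : Fin 4 → ℝ :=
  Fin.snoc (-((leftBlock A)⁻¹ *ᵥ tCol A)) 1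

/-- The principal ray `det G • (third row of A)`. -/
def principalRay (A : Matrix (Fin 3) (Fin 4) ℝ) : Fin 4 → ℝ :=
  (leftBlock A).det • A 2

/-- `n_∞ = (0,0,0,1)`. -/
def nInf : Fin 4 → ℝ := Fin.snoc (0 : Fin 3 → ℝ) 1

/-- The chiral domain `D_𝒜`: the closure, within `ℝ⁴ ∖ {0}` (i.e. ambient closure
intersected with `ℝ⁴ ∖ {0}`), of the set of finite vectors (last coordinate nonzero)
having positive depth in every camera of the arrangement. -/
def chiralDomain {m : ℕ} (A : Fin m → Matrix (Fin 3) (Fin 4) ℝ) : Set (Fin 4 → ℝ) :=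
  closure {q : Fin 4 → ℝ | nInf ⬝ᵥ q ≠ 0 ∧ ∀ i, 0 < (principalRay (A i) ⬝ᵥ q) * (nInf ⬝ᵥ q)}
    ∩ {q : Fin 4 → ℝ | q ≠ 0}

/-- The joint image `J_𝒜` (at the level of representatives): tuples of nonzero vectors
representing `(A₁ q, …, A_m q)` for some `q ∈ ℙ³` that is not a camera center. -/
def jointImage {m : ℕ} (A : Fin m → Matrix (Fin 3) (Fin 4) ℝ) :
    Set (Fin m → Fin 3 → ℝ) :=
  {p | (∀ i, p i ≠ 0) ∧
    ∃ q : Fin 4 → ℝ, q ≠ 0 ∧ ∀ i, ∃ c : ℝ, c ≠ 0 ∧ p i = c • (A i *ᵥ q)}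

/-- The chiral joint image `X_𝒜 = φ_𝒜(D_𝒜)` (at the level of representatives). -/
def chiralJointImage {m : ℕ} (A : Fin m → Matrix (Fin 3) (Fin 4) ℝ) :
    Set (Fin m → Fin 3 → ℝ) :=
  {p | (∀ i, p i ≠ 0) ∧
    ∃ q ∈ chiralDomain A, ∀ i, ∃ c : ℝ, c ≠ 0 ∧ p i = c • (A i *ᵥ q)}

/-- `a_i = G_i⁻¹ p_i`. -/
def aVec (A : Matrix (Fin 3) (Fin 4) ℝ) (p : Fin 3 → ℝ) : Fin 3 → ℝ :=
  (leftBlock A)⁻¹ *ᵥ p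

/-- `b_ij = G_i⁻¹ t_i - G_j⁻¹ t_j`. -/
def bVec (A B : Matrix (Fin 3) (Fin 4) ℝ) : Fin 3 → ℝ :=
  (leftBlock A)⁻¹ *ᵥ tCol A - (leftBlock B)⁻¹ *ᵥ tCol B

/-- The chirality constraint set `C_𝒜`, cut out by the biquadratic inequalities
`det(G_i)·p_{i3}·((a_i × a_j)ᵀ(b_ij × a_j)) ≥ 0` and
`det(G_i)·det(G_j)·p_{i3}·p_{j3}·((b_ij × a_i)ᵀ(b_ij × a_j)) ≥ 0` for all `i, j`. -/
def CSet {m : ℕ} (A : Fin m → Matrix (Fin 3) (Fin 4) ℝ) :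
    Set (Fin m → Fin 3 → ℝ) :=
  {p | ∀ i j,
    0 ≤ (leftBlock (A i)).det * p i 2 *
        ((aVec (A i) (p i) ⨯₃ aVec (A j) (p j)) ⬝ᵥ (bVec (A i) (A j) ⨯₃ aVec (A j) (p j))) ∧
    0 ≤ (leftBlock (A i)).det * (leftBlock (A j)).det * p i 2 * p j 2 *
        ((bVec (A i) (A j) ⨯₃ aVec (A i) (p i)) ⬝ᵥ (bVec (A i) (A j) ⨯₃ aVec (A j) (p j)))}

/-- `E_j`: tuples whose `i`-th coordinate, for `i ≠ j`, represents the epipole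
`e_ij = A_i c_j`, with free `j`-th coordinate. -/
def Eset {m : ℕ} (A : Fin m → Matrix (Fin 3) (Fin 4) ℝ) (j : Fin m) :
    Set (Fin m → Fin 3 → ℝ) :=
  {p | (∀ i, p i ≠ 0) ∧ ∀ i, i ≠ j → ∃ c : ℝ, c ≠ 0 ∧ p i = c • (A i *ᵥ camCenter (A j))}

/-- `E⁺⁺`: the union of the `E_j` over those `j` whose center has positive depth in every
other camera. -/
def Eplusplus {m : ℕ} (A : Fin m → Matrix (Fin 3) (Fin 4) ℝ) : Set (Fin m → Fin 3 → ℝ) :=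
  ⋃ j ∈ {j : Fin m | ∀ i, i ≠ j →
      0 < (principalRay (A i) ⬝ᵥ camCenter (A j)) * (nInf ⬝ᵥ camCenter (A j))}, Eset A j

/-! Fix `p ∈ E_j` and leave the center `c_j` along the curve
`q(u) = c_j + u (G_j⁻¹ p_j, 0) + u² (G_j⁻¹ w, 0)`. Then `A_j q(u) = u (p_j + u w)` represents
`p_j + u w → p_j`, while `A_i q(u) → A_i c_j = e_ij` for `i ≠ j`, and the depths of `q(u)` in the
cameras `i ≠ j` tend to the positive depths of `c_j`. With `w = det(G_j) e₃` and the sign of `u`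
chosen so that `u · det(G_j) · p_{j3} ≥ 0`, the depth `det(G_j) u (p_{j3} + u det G_j)` in camera `j`
is positive as well, so `q(u)` lies in the chiral domain for all small `u` of that sign. -/

open Filter Topology

lemma mulVec_snoc (M : Matrix (Fin 3) (Fin 4) ℝ) (x : Fin 3 → ℝ) (s : ℝ) :
    M *ᵥ Fin.snoc x s = leftBlock M *ᵥ x + s • tCol M := by
  funext i
  rw [Pi.add_apply, mulVec, dotProduct, Fin.sum_univ_castSucc]
  simp only [Fin.snoc_castSucc, Fin.snoc_last]
  simp [leftBlock, tCol, mulVec, dotProduct, mul_comm]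

lemma mulVec_camCenter {M : Matrix (Fin 3) (Fin 4) ℝ} (h : FiniteCam M) :
    M *ᵥ camCenter M = 0 := by
  rw [camCenter, mulVec_snoc, mulVec_neg, mulVec_mulVec, mul_nonsing_inv _ (Ne.isUnit h),
    one_mulVec, one_smul, neg_add_cancel]

lemma mulVec_snoc_leftBlock_inv {M : Matrix (Fin 3) (Fin 4) ℝ} (h : FiniteCam M)
    (v : Fin 3 → ℝ) : M *ᵥ Fin.snoc ((leftBlock M)⁻¹ *ᵥ v) 0 = v := by
  rw [mulVec_snoc, mulVec_mulVec, mul_nonsing_inv _ (Ne.isUnit h), one_mulVec, zero_smul,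
    add_zero]

lemma nInf_dotProduct (x : Fin 4 → ℝ) : nInf ⬝ᵥ x = x (Fin.last 3) := by
  simp only [nInf, dotProduct, Fin.sum_univ_castSucc, Fin.snoc_castSucc, Fin.snoc_last]
  simp

lemma principalRay_dotProduct (M : Matrix (Fin 3) (Fin 4) ℝ) (x : Fin 4 → ℝ) :
    principalRay M ⬝ᵥ x = (leftBlock M).det * (M *ᵥ x) 2 := by
  simp [principalRay, smul_dotProduct, Matrix.mulVec]

lemma nInf_dotProduct_camCenter (M : Matrix (Fin 3) (Fin 4) ℝ) : nInf ⬝ᵥ camCenter M = 1 := by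
  rw [nInf_dotProduct, camCenter, Fin.snoc_last]

def centerCurve (M : Matrix (Fin 3) (Fin 4) ℝ) (v w : Fin 3 → ℝ) (u : ℝ) : Fin 4 → ℝ :=
  camCenter M + u • Fin.snoc ((leftBlock M)⁻¹ *ᵥ v) 0 +
    (u * u) • Fin.snoc ((leftBlock M)⁻¹ *ᵥ w) 0

section centerCurve

variable (M : Matrix (Fin 3) (Fin 4) ℝ) (v w : Fin 3 → ℝ)

lemma continuous_centerCurve : Continuous (centerCurve M v w) := by
  unfold centerCurve
  fun_prop

lemma centerCurve_zero : centerCurve M v w 0 = camCenter M := by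
  simp [centerCurve]

lemma nInf_dotProduct_centerCurve (u : ℝ) : nInf ⬝ᵥ centerCurve M v w u = 1 := by
  simp only [centerCurve, dotProduct_add, dotProduct_smul, nInf_dotProduct_camCenter]
  simp only [nInf_dotProduct, Fin.snoc_last, smul_eq_mul, mul_zero, add_zero]

lemma mulVec_centerCurve {M} (h : FiniteCam M) (u : ℝ) :
    M *ᵥ centerCurve M v w u = u • (v + u • w) := by
  simp only [centerCurve, mulVec_add, mulVec_smul, mulVec_camCenter h,
    mulVec_snoc_leftBlock_inv h, smul_add, smul_smul, zero_add]

lemma tendsto_mulVec_centerCurve (N : Matrix (Fin 3) (Fin 4) ℝ) :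
    Tendsto (fun u => N *ᵥ centerCurve M v w u) (𝓝 0) (𝓝 (N *ᵥ camCenter M)) := by
  have := continuous_centerCurve M v w
  have hcont : Continuous fun u => N *ᵥ centerCurve M v w u := by fun_prop
  simpa [centerCurve_zero] using hcont.tendsto 0

lemma eventually_dotProduct_centerCurve_pos {n : Fin 4 → ℝ} (hn : 0 < n ⬝ᵥ camCenter M) :
    ∀ᶠ u in 𝓝 0, 0 < n ⬝ᵥ centerCurve M v w u := by
  have hcont : Continuous fun u => n ⬝ᵥ centerCurve M v w u :=
    continuous_const.dotProduct (continuous_centerCurve M v w)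
  exact (hcont.tendsto 0).eventually (eventually_gt_nhds (by rwa [centerCurve_zero]))

lemma tendsto_inv_smul_mulVec_centerCurve {M} (h : FiniteCam M) :
    Tendsto (fun u => u⁻¹ • (M *ᵥ centerCurve M v w u)) (𝓝[≠] 0) (𝓝 v) := by
  have hlim : Tendsto (fun u : ℝ => v + u • w) (𝓝[≠] 0) (𝓝 v) := by
    have hcont : Continuous fun u : ℝ => v + u • w := by fun_prop
    simpa using (hcont.tendsto 0).mono_left nhdsWithin_le_nhds
  refine hlim.congr' ?_
  filter_upwards [self_mem_nhdsWithin] with u hu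
  rw [mulVec_centerCurve _ _ h, smul_smul, inv_mul_cancel₀ hu, one_smul]

end centerCurve

lemma principalRay_dotProduct_centerCurve_pos {M : Matrix (Fin 3) (Fin 4) ℝ} (h : FiniteCam M)
    (v : Fin 3 → ℝ) {σ ε : ℝ} (hσ : σ ^ 2 = 1) (hσv : 0 ≤ σ * ((leftBlock M).det * v 2))
    (hε : 0 < ε) :
    0 < principalRay M ⬝ᵥ centerCurve M v (Pi.single 2 (leftBlock M).det) (σ * ε) := by
  have hD : (leftBlock M).det ≠ 0 := h
  rw [principalRay_dotProduct, mulVec_centerCurve v _ h]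
  simp only [Pi.smul_apply, Pi.add_apply, Pi.single_eq_same, smul_eq_mul]
  have : 0 < ε ^ 2 * (leftBlock M).det ^ 2 := by positivity
  nlinarith

lemma tendsto_const_mul_nhdsGT_zero {σ : ℝ} (hσ : σ ≠ 0) :
    Tendsto (σ * ·) (𝓝[>] 0) (𝓝[≠] 0) := by
  refine tendsto_nhdsWithin_iff.2 ⟨?_, ?_⟩
  · exact ((continuous_const_mul σ).tendsto' 0 0 (mul_zero σ)).mono_left nhdsWithin_le_nhds
  · filter_upwards [self_mem_nhdsWithin] with ε hε using mul_ne_zero hσ (ne_of_gt hε)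

section chiral

variable {m : ℕ} (A : Fin m → Matrix (Fin 3) (Fin 4) ℝ)

def positiveDepthSet : Set (Fin 4 → ℝ) :=
  {q | nInf ⬝ᵥ q ≠ 0 ∧ ∀ i, 0 < (principalRay (A i) ⬝ᵥ q) * (nInf ⬝ᵥ q)}

lemma positiveDepthSet_subset_chiralDomain : positiveDepthSet A ⊆ chiralDomain A :=
  fun q hq => ⟨subset_closure hq, fun h0 => hq.1 (by rw [h0, dotProduct_zero])⟩

variable {A}

lemma mem_closure_chiralJointImage_of_tendsto {ι : Type*} {l : Filter ι} [l.NeBot]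
    {p : Fin m → Fin 3 → ℝ} (hp : ∀ i, p i ≠ 0) (q : ι → Fin 4 → ℝ) (s : ι → Fin m → ℝ)
    (hq : ∀ᶠ x in l, q x ∈ positiveDepthSet A) (hs : ∀ᶠ x in l, ∀ i, s x i ≠ 0)
    (hlim : ∀ i, Tendsto (fun x => s x i • (A i *ᵥ q x)) l (𝓝 (p i))) :
    p ∈ closure (chiralJointImage A) := by
  refine mem_closure_of_tendsto (tendsto_pi_nhds.2 hlim) ?_
  have hne : ∀ᶠ x in l, ∀ i, s x i • (A i *ᵥ q x) ≠ 0 :=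
    eventually_all.2 fun i => (hlim i).eventually_ne (hp i)
  filter_upwards [hq, hs, hne] with x hqx hsx hnex
  exact ⟨hnex, q x, positiveDepthSet_subset_chiralDomain A hqx, fun i => ⟨s x i, hsx i, rfl⟩⟩

lemma eventually_centerCurve_mem_positiveDepthSet {j : Fin m} (hfin : FiniteCam (A j))
    (hj : ∀ i, i ≠ j → 0 < principalRay (A i) ⬝ᵥ camCenter (A j)) (v : Fin 3 → ℝ) {σ : ℝ}
    (hσ : σ ^ 2 = 1) (hσv : 0 ≤ σ * ((leftBlock (A j)).det * v 2)) :
    ∀ᶠ ε in 𝓝[>] 0,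
      centerCurve (A j) v (Pi.single 2 (leftBlock (A j)).det) (σ * ε) ∈ positiveDepthSet A := by
  set w : Fin 3 → ℝ := Pi.single 2 (leftBlock (A j)).det
  have hu : Tendsto (σ * ·) (𝓝[>] 0) (𝓝 0) :=
    ((continuous_const_mul σ).tendsto' 0 0 (mul_zero σ)).mono_left nhdsWithin_le_nhds
  have hother : ∀ᶠ u in 𝓝 0, ∀ i, i ≠ j → 0 < principalRay (A i) ⬝ᵥ centerCurve (A j) v w u :=
    eventually_all.2 fun i => eventually_imp_distrib_left.2 fun h =>
      eventually_dotProduct_centerCurve_pos _ _ _ (hj i h)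
  filter_upwards [self_mem_nhdsWithin, hu.eventually hother] with ε hε hεi
  refine ⟨by rw [nInf_dotProduct_centerCurve]; exact one_ne_zero, fun i => ?_⟩
  rw [nInf_dotProduct_centerCurve, mul_one]
  by_cases h : i = j
  · subst h
    exact principalRay_dotProduct_centerCurve_pos hfin v hσ hσv hε
  · exact hεi i h

lemma Eset_subset_closure_chiralJointImage {j : Fin m} (hfin : FiniteCam (A j))
    (hj : ∀ i, i ≠ j → 0 < principalRay (A i) ⬝ᵥ camCenter (A j)) :
    Eset A j ⊆ closure (chiralJointImage A) := by
  rintro p ⟨hp0, hepi⟩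
  choose c hc0 hc using hepi
  obtain ⟨σ, hσ, hσp⟩ : ∃ σ : ℝ, σ ^ 2 = 1 ∧ 0 ≤ σ * ((leftBlock (A j)).det * p j 2) := by
    rcases le_total 0 ((leftBlock (A j)).det * p j 2) with h | h
    · exact ⟨1, one_pow 2, by linarith⟩
    · exact ⟨-1, by norm_num, by linarith⟩
  have hu := tendsto_const_mul_nhdsGT_zero (σ := σ) (by rintro rfl; norm_num at hσ)
  refine mem_closure_chiralJointImage_of_tendsto hp0
    (fun ε => centerCurve (A j) (p j) (Pi.single 2 (leftBlock (A j)).det) (σ * ε))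
    (fun ε i => if h : i = j then (σ * ε)⁻¹ else c i h)
    (eventually_centerCurve_mem_positiveDepthSet hfin hj (p j) hσ hσp) ?_ fun i => ?_
  · filter_upwards [(tendsto_nhdsWithin_iff.1 hu).2] with ε hε i
    split_ifs with h
    exacts [inv_ne_zero hε, hc0 i h]
  · by_cases h : i = j
    · subst h
      simp only [dif_pos]
      exact (tendsto_inv_smul_mulVec_centerCurve _ _ hfin).comp hu
    · simp only [dif_neg h, hc i h]
      exact ((tendsto_mulVec_centerCurve _ _ _ _).comp
        (tendsto_nhdsWithin_iff.1 hu).1).const_smul _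

end chiral

theorem Eplusplus_subset_closure_chiralJointImage_general {m : ℕ}
    (A : Fin m → Matrix (Fin 3) (Fin 4) ℝ)
    (hfin : ∀ i, FiniteCam (A i)) :
    Eplusplus A ⊆ closure (chiralJointImage A) :=
  Set.iUnion₂_subset fun j hj => Eset_subset_closure_chiralJointImage (hfin j) fun i hi => by
    simpa [nInf_dotProduct_camCenter] using hj i hi

/-- `E⁺⁺` is contained in the Euclidean closure of the chiral joint image in
`(ℙ²)^m` (at the level of representatives). -/
theorem Eplusplus_subset_closure_chiralJointImage {m : ℕ}
    (A : Fin m → Matrix (Fin 3) (Fin 4) ℝ)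
    (hfin : ∀ i, FiniteCam (A i))
    (hdist : ∀ i j, i ≠ j → camCenter (A i) ≠ camCenter (A j)) :
    Eplusplus A ⊆ closure (chiralJointImage A) :=
  Eplusplus_subset_closure_chiralJointImage_general A hfin
end
end

section
/- Let A₁ = [G₁ | t₁] and A₂ = [G₂ | t₂] be finite cameras with distinct centers c₁, c₂. Fix q ∈ ℝ⁴ ∖ {0} not proportional to c₁ or c₂ and not lying on the baseline (the span of c₁ and c₂), and write A_i·q = λ_i·p_i with λ_i ∈ ℝ and p_i ∈ ℝ³ ∖ {0}. Set a_i = G_i⁻¹p_i and b₁₂ = G₁⁻¹t₁ − G₂⁻¹t₂, and let × be the cross product on ℝ³. Then: b₁₂ᵀ(a₁ × a₂) = 0; sign(λ₁·q₄) = sign((a₁ × a₂)ᵀ(b₁₂ × a₂)); sign(λ₂·q₄) = sign((a₁ × a₂)ᵀ(b₁₂ × a₁)); and sign(λ₁·λ₂) = sign((b₁₂ × a₁)ᵀ(b₁₂ × a₂)). -/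
open Matrix

/-!
Write `q = (x, w)` and `uᵢ = Gᵢ⁻¹tᵢ`. Applying `Gᵢ⁻¹` to `Aᵢq = λᵢpᵢ` gives `x + w uᵢ = λᵢaᵢ`, so
`λ₁a₁ − λ₂a₂ = w b`. Crossing this relation with `b` and with `λ₁a₁` shows that
`v = b × λ₁a₁ = b × λ₂a₂` and `λ₁λ₂ (a₁ × a₂) = w v`. Dotting the latter with `b ⊥ v` gives the
first claim; dotting these identities with each other expresses each of the other quantities,
up to a positive factor, as `v ⬝ v` times the corresponding product of `λ₁, λ₂, w`. Finally `v ≠ 0` (hence also `λ₁, λ₂ ≠ 0`): `v` vanishes exactly when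
`x + w u₁` is parallel to `b = u₁ − u₂`, i.e. when `q` lies on the baseline.
-/

namespace Real

theorem sign_mul_of_pos {c : ℝ} (hc : 0 < c) (x : ℝ) : sign (c * x) = sign x := by
  rcases lt_trichotomy x 0 with hx | rfl | hx
  · rw [sign_of_neg hx, sign_of_neg (mul_neg_of_pos_of_neg hc hx)]
  · rw [mul_zero]
  · rw [sign_of_pos hx, sign_of_pos (mul_pos hc hx)]

theorem sign_eq_sign_of_mul_eq_mul {c d x y : ℝ} (hc : 0 < c) (hd : 0 < d)
    (h : c * x = d * y) : sign x = sign y := by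
  rw [← sign_mul_of_pos hc, h, sign_mul_of_pos hd]

end Real

section CrossRelations

variable {R : Type*} [CommRing R] {a₁ a₂ b : Fin 3 → R} {l₁ l₂ w : R}

theorem cross_smul_eq_cross_smul_of_sub_eq_smul (h : l₁ • a₁ - l₂ • a₂ = w • b) :
    b ⨯₃ (l₂ • a₂) = b ⨯₃ (l₁ • a₁) := by
  rw [← sub_eq_zero, ← map_sub, ← neg_sub, h, map_neg, _root_.map_smul, cross_self, smul_zero,
    neg_zero]

theorem smul_cross_eq_smul_cross_of_sub_eq_smul (h : l₁ • a₁ - l₂ • a₂ = w • b) :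
    (l₁ * l₂) • (a₁ ⨯₃ a₂) = w • (b ⨯₃ (l₁ • a₁)) := by
  have h₂ : l₂ • a₂ = l₁ • a₁ - w • b := by rw [← h, sub_sub_cancel]
  calc (l₁ * l₂) • (a₁ ⨯₃ a₂) = (l₁ • a₁) ⨯₃ (l₂ • a₂) := by
        rw [LinearMap.map_smul₂, _root_.map_smul, smul_smul]
    _ = (l₁ • a₁) ⨯₃ (l₁ • a₁ - w • b) := by rw [h₂]
    _ = w • (b ⨯₃ (l₁ • a₁)) := by
        rw [map_sub, cross_self, zero_sub, _root_.map_smul, ← smul_neg, cross_anticomm]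

end CrossRelations

theorem sign_relations_of_sub_eq_smul {a₁ a₂ b : Fin 3 → ℝ} {l₁ l₂ w : ℝ}
    (h : l₁ • a₁ - l₂ • a₂ = w • b) (hv : b ⨯₃ (l₁ • a₁) ≠ 0) :
    b ⬝ᵥ (a₁ ⨯₃ a₂) = 0 ∧
    Real.sign (l₁ * w) = Real.sign ((a₁ ⨯₃ a₂) ⬝ᵥ (b ⨯₃ a₂)) ∧
    Real.sign (l₂ * w) = Real.sign ((a₁ ⨯₃ a₂) ⬝ᵥ (b ⨯₃ a₁)) ∧
    Real.sign (l₁ * l₂) = Real.sign ((b ⨯₃ a₁) ⬝ᵥ (b ⨯₃ a₂)) := by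
  have hv₂ := cross_smul_eq_cross_smul_of_sub_eq_smul h
  have hcross := smul_cross_eq_smul_cross_of_sub_eq_smul h
  set v := b ⨯₃ (l₁ • a₁) with hv_def
  have hv₁ : l₁ • (b ⨯₃ a₁) = v := (_root_.map_smul _ _ _).symm
  rw [_root_.map_smul] at hv₂
  have hl₁ : l₁ ≠ 0 := by rintro rfl; simp [v] at hv
  have hl₂ : l₂ ≠ 0 := by rintro rfl; simp [← hv₂] at hv
  have hl : 0 < (l₁ * l₂) ^ 2 := by positivity
  have hvv : 0 < v ⬝ᵥ v := by simpa using dotProduct_self_star_pos_iff.mpr hv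
  refine ⟨?_, ?_, ?_, ?_⟩
  · have e : b ⬝ᵥ ((l₁ * l₂) • (a₁ ⨯₃ a₂)) = b ⬝ᵥ (w • v) := by rw [hcross]
    rw [dotProduct_smul, dotProduct_smul, hv_def, dot_self_cross, smul_zero, smul_eq_mul] at e
    exact (mul_eq_zero.mp e).resolve_left (mul_ne_zero hl₁ hl₂)
  · have e : ((l₁ * l₂) • (a₁ ⨯₃ a₂)) ⬝ᵥ (l₂ • (b ⨯₃ a₂)) = (w • v) ⬝ᵥ v := by rw [hcross, hv₂]
    simp only [smul_dotProduct, dotProduct_smul, smul_eq_mul] at e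
    exact (Real.sign_eq_sign_of_mul_eq_mul hl hvv (by linear_combination l₁ * e)).symm
  · have e : ((l₁ * l₂) • (a₁ ⨯₃ a₂)) ⬝ᵥ (l₁ • (b ⨯₃ a₁)) = (w • v) ⬝ᵥ v := by rw [hcross, hv₁]
    simp only [smul_dotProduct, dotProduct_smul, smul_eq_mul] at e
    exact (Real.sign_eq_sign_of_mul_eq_mul hl hvv (by linear_combination l₂ * e)).symm
  · have e : (l₁ • (b ⨯₃ a₁)) ⬝ᵥ (l₂ • (b ⨯₃ a₂)) = v ⬝ᵥ v := by rw [hv₁, hv₂]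
    simp only [smul_dotProduct, dotProduct_smul, smul_eq_mul] at e
    exact (Real.sign_eq_sign_of_mul_eq_mul hl hvv (by linear_combination l₁ * l₂ * e)).symm

theorem mulVec_eq_leftBlock_mulVec_add (A : Matrix (Fin 3) (Fin 4) ℝ) (q : Fin 4 → ℝ) :
    A *ᵥ q = leftBlock A *ᵥ Fin.init q + q 3 • tCol A := by
  funext i
  simp only [mulVec, dotProduct, Pi.add_apply, Pi.smul_apply, smul_eq_mul, Fin.sum_univ_castSucc]
  simp [leftBlock, tCol, Fin.init, mul_comm]

theorem leftBlock_inv_mulVec_mulVec {A : Matrix (Fin 3) (Fin 4) ℝ} (hA : FiniteCam A)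
    (q : Fin 4 → ℝ) :
    (leftBlock A)⁻¹ *ᵥ (A *ᵥ q) = Fin.init q + q 3 • ((leftBlock A)⁻¹ *ᵥ tCol A) := by
  rw [mulVec_eq_leftBlock_mulVec_add, mulVec_add, mulVec_mulVec,
    nonsing_inv_mul _ (isUnit_iff_ne_zero.mpr hA), one_mulVec, mulVec_smul]

theorem eq_smul_camCenter_add_smul_camCenter (A₁ A₂ : Matrix (Fin 3) (Fin 4) ℝ)
    {q : Fin 4 → ℝ} {s : ℝ}
    (h : s • ((leftBlock A₁)⁻¹ *ᵥ tCol A₁ - (leftBlock A₂)⁻¹ *ᵥ tCol A₂) =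
      Fin.init q + q 3 • ((leftBlock A₁)⁻¹ *ᵥ tCol A₁)) :
    q = (q 3 - s) • camCenter A₁ + s • camCenter A₂ := by
  refine funext fun j => Fin.lastCases ?_ (fun i => ?_) j
  · simp only [camCenter, Pi.add_apply, Pi.smul_apply, Fin.snoc_last, smul_eq_mul]
    rw [mul_one, mul_one, sub_add_cancel]
    rfl
  · have hi := congrFun h i
    simp only [Pi.smul_apply, Pi.sub_apply, Pi.add_apply, smul_eq_mul, Fin.init] at hi
    simp only [camCenter, Pi.add_apply, Pi.smul_apply, Fin.snoc_castSucc, Pi.neg_apply,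
      smul_eq_mul]
    linear_combination -hi

theorem cross_ne_zero_of_notMem_baseline {A₁ A₂ : Matrix (Fin 3) (Fin 4) ℝ}
    (hdist : camCenter A₁ ≠ camCenter A₂) {q : Fin 4 → ℝ}
    (hbase : ¬ ∃ α β : ℝ, q = α • camCenter A₁ + β • camCenter A₂) :
    ((leftBlock A₁)⁻¹ *ᵥ tCol A₁ - (leftBlock A₂)⁻¹ *ᵥ tCol A₂) ⨯₃
      (Fin.init q + q 3 • ((leftBlock A₁)⁻¹ *ᵥ tCol A₁)) ≠ 0 := by
  have hb : (leftBlock A₁)⁻¹ *ᵥ tCol A₁ - (leftBlock A₂)⁻¹ *ᵥ tCol A₂ ≠ 0 := by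
    intro h
    exact hdist (by rw [camCenter, camCenter, sub_eq_zero.mp h])
  rw [crossProduct_ne_zero_iff_linearIndependent, LinearIndependent.pair_iff' hb]
  rintro s hs
  exact hbase ⟨_, _, eq_smul_camCenter_add_smul_camCenter A₁ A₂ hs⟩

theorem two_view_sign_relations_general
    (A₁ A₂ : Matrix (Fin 3) (Fin 4) ℝ)
    (h₁ : FiniteCam A₁) (h₂ : FiniteCam A₂)
    (hdist : camCenter A₁ ≠ camCenter A₂)
    (q : Fin 4 → ℝ)
    (hbase : ¬ ∃ α β : ℝ, q = α • camCenter A₁ + β • camCenter A₂)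
    (lam₁ lam₂ : ℝ) (p₁ p₂ : Fin 3 → ℝ)
    (him₁ : A₁ *ᵥ q = lam₁ • p₁) (him₂ : A₂ *ᵥ q = lam₂ • p₂)
    (a₁ a₂ b : Fin 3 → ℝ)
    (ha₁ : a₁ = (leftBlock A₁)⁻¹ *ᵥ p₁) (ha₂ : a₂ = (leftBlock A₂)⁻¹ *ᵥ p₂)
    (hb : b = (leftBlock A₁)⁻¹ *ᵥ tCol A₁ - (leftBlock A₂)⁻¹ *ᵥ tCol A₂) :
    b ⬝ᵥ (a₁ ⨯₃ a₂) = 0 ∧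
    Real.sign (lam₁ * q 3) = Real.sign ((a₁ ⨯₃ a₂) ⬝ᵥ (b ⨯₃ a₂)) ∧
    Real.sign (lam₂ * q 3) = Real.sign ((a₁ ⨯₃ a₂) ⬝ᵥ (b ⨯₃ a₁)) ∧
    Real.sign (lam₁ * lam₂) = Real.sign ((b ⨯₃ a₁) ⬝ᵥ (b ⨯₃ a₂)) := by
  have hA₁ : lam₁ • a₁ = Fin.init q + q 3 • ((leftBlock A₁)⁻¹ *ᵥ tCol A₁) := by
    rw [ha₁, ← mulVec_smul, ← him₁, leftBlock_inv_mulVec_mulVec h₁]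
  have hA₂ : lam₂ • a₂ = Fin.init q + q 3 • ((leftBlock A₂)⁻¹ *ᵥ tCol A₂) := by
    rw [ha₂, ← mulVec_smul, ← him₂, leftBlock_inv_mulVec_mulVec h₂]
  have hrel : lam₁ • a₁ - lam₂ • a₂ = q 3 • b := by
    rw [hA₁, hA₂, hb, smul_sub, add_sub_add_left_eq_sub]
  have hv : b ⨯₃ (lam₁ • a₁) ≠ 0 := by
    rw [hA₁, hb]
    exact cross_ne_zero_of_notMem_baseline hdist hbase
  exact sign_relations_of_sub_eq_smul hrel hv

/-- for two finite cameras with distinct centers and `q` not proportional to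
either center and off the baseline, writing `A_i q = λ_i p_i` with `p_i ≠ 0`,
`a_i = G_i⁻¹p_i`, `b = G₁⁻¹t₁ − G₂⁻¹t₂`: `bᵀ(a₁ × a₂) = 0`,
`sign(λ₁q₄) = sign((a₁ × a₂)ᵀ(b × a₂))`, `sign(λ₂q₄) = sign((a₁ × a₂)ᵀ(b × a₁))` and
`sign(λ₁λ₂) = sign((b × a₁)ᵀ(b × a₂))`. -/
theorem two_view_sign_relations
    (A₁ A₂ : Matrix (Fin 3) (Fin 4) ℝ)
    (h₁ : FiniteCam A₁) (h₂ : FiniteCam A₂)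
    (hdist : camCenter A₁ ≠ camCenter A₂)
    (q : Fin 4 → ℝ) (hq : q ≠ 0)
    (hqc₁ : ¬ ∃ c : ℝ, q = c • camCenter A₁)
    (hqc₂ : ¬ ∃ c : ℝ, q = c • camCenter A₂)
    (hbase : ¬ ∃ α β : ℝ, q = α • camCenter A₁ + β • camCenter A₂)
    (lam₁ lam₂ : ℝ) (p₁ p₂ : Fin 3 → ℝ) (hp₁ : p₁ ≠ 0) (hp₂ : p₂ ≠ 0)
    (him₁ : A₁ *ᵥ q = lam₁ • p₁) (him₂ : A₂ *ᵥ q = lam₂ • p₂)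
    (a₁ a₂ b : Fin 3 → ℝ)
    (ha₁ : a₁ = (leftBlock A₁)⁻¹ *ᵥ p₁) (ha₂ : a₂ = (leftBlock A₂)⁻¹ *ᵥ p₂)
    (hb : b = (leftBlock A₁)⁻¹ *ᵥ tCol A₁ - (leftBlock A₂)⁻¹ *ᵥ tCol A₂) :
    b ⬝ᵥ (a₁ ⨯₃ a₂) = 0 ∧
    Real.sign (lam₁ * q 3) = Real.sign ((a₁ ⨯₃ a₂) ⬝ᵥ (b ⨯₃ a₂)) ∧
    Real.sign (lam₂ * q 3) = Real.sign ((a₁ ⨯₃ a₂) ⬝ᵥ (b ⨯₃ a₁)) ∧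
    Real.sign (lam₁ * lam₂) = Real.sign ((b ⨯₃ a₁) ⬝ᵥ (b ⨯₃ a₂)) :=
  two_view_sign_relations_general A₁ A₂ h₁ h₂ hdist q hbase lam₁ lam₂ p₁ p₂ him₁ him₂ a₁ a₂ b ha₁
    ha₂ hb
end
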